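/- Let D be a totally ordered integral domain and (S, ◁) a proximity Specker D-algebra. Then for all s, t ∈ S: s ◁ t if and only if s^♭(b) ◁ t^♭(b) for all b ∈ D. -/

import Mathlib

open Finset

/-- A `D`-algebra `S` is torsion-free as a `D`-module. -/
def SpTorsionFree (D S : Type*) [CommRing D] [CommRing S] [Algebra D S] : Prop :=
  ∀ (a : D) (s : S), a • s = 0 → a = 0 ∨ s = 0

/-- `S` is generated as a `D`-algebra by its idempotents. -/
def SpIdemGenerated (D S : Type*) [CommRing D] [CommRing S] [Algebra D S] : Prop :=
  Algebra.adjoin D {e : S | IsIdempotentElem e} = ⊤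

/-- A Specker `D`-algebra: commutative unital, torsion-free, idempotent-generated. -/
def IsSpecker (D S : Type*) [CommRing D] [CommRing S] [Algebra D S] : Prop :=
  SpTorsionFree D S ∧ SpIdemGenerated D S

/-- The idempotents of `S`. -/
abbrev IdemOf (S : Type*) [Monoid S] := {e : S // IsIdempotentElem e}

/-- A full orthogonal decomposition of `s` with pairwise distinct coefficients and
nonzero pairwise orthogonal idempotents summing (= joining) to `1`. -/
def FullOrthDecomp (D S : Type*) [CommRing D] [CommRing S] [Algebra D S] {n : ℕ}
    (a : Fin n → D) (e : Fin n → S) (s : S) : Prop :=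
  Function.Injective a ∧ (∀ i, IsIdempotentElem (e i)) ∧ (∀ i, e i ≠ 0) ∧
    (∀ i j, i ≠ j → e i * e j = 0) ∧ (∑ i, e i = 1) ∧ s = ∑ i, a i • e i

/-- `s` has an orthogonal decomposition with nonnegative coefficients. -/
def OrthNonnegDecomp (D S : Type*) [CommRing D] [LinearOrder D] [IsStrictOrderedRing D] [CommRing S] [Algebra D S]
    (s : S) : Prop :=
  ∃ (n : ℕ) (a : Fin n → D) (e : Fin n → S),
    (∀ i, 0 ≤ a i) ∧ (∀ i, IsIdempotentElem (e i)) ∧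
    (∀ i j, i ≠ j → e i * e j = 0) ∧ s = ∑ i, a i • e i

/-- The canonical f-algebra order relation on a Specker algebra. -/
def specLE (D S : Type*) [CommRing D] [LinearOrder D] [IsStrictOrderedRing D] [CommRing S] [Algebra D S]
    (s t : S) : Prop :=
  OrthNonnegDecomp D S (t - s)

section Rel
variable {S : Type*}
def relUB (le : S → S → Prop) (A : Set S) (u : S) : Prop := ∀ x ∈ A, le x u
def relLB (le : S → S → Prop) (A : Set S) (u : S) : Prop := ∀ x ∈ A, le u x
def relIsLUB (le : S → S → Prop) (A : Set S) (u : S) : Prop :=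
  relUB le A u ∧ ∀ v, relUB le A v → le u v
def relIsGLB (le : S → S → Prop) (A : Set S) (u : S) : Prop :=
  relLB le A u ∧ ∀ v, relLB le A v → le v u
end Rel

/-- A function `D → B` belonging to Foster's boolean power `D[B]*`:
finitely valued, pairwise disjoint values, values join to `⊤`. -/
def IsBPFn (D B : Type*) [CommRing D] [BooleanAlgebra B] (f : D → B) : Prop :=
  (Set.range f).Finite ∧ (∀ a b : D, a ≠ b → f a ⊓ f b = ⊥) ∧ IsLUB (Set.range f) ⊤

/-- Foster's boolean power `D[B]*` as a set of functions. -/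
def DBStar (D B : Type*) [CommRing D] [BooleanAlgebra B] : Type _ :=
  {f : D → B // IsBPFn D B f}

/-- The boolean-power `D`-algebra operations on `D[B]*`, characterized via least upper bounds. -/
def FosterOps (D B : Type*) [CommRing D] [BooleanAlgebra B]
    [CommRing (DBStar D B)] [Algebra D (DBStar D B)] : Prop :=
  (∀ f g : DBStar D B, ∀ a : D,
      IsLUB {x : B | ∃ b c : D, b + c = a ∧ x = f.1 b ⊓ g.1 c} ((f + g).1 a)) ∧
  (∀ f g : DBStar D B, ∀ a : D,
      IsLUB {x : B | ∃ b c : D, b * c = a ∧ x = f.1 b ⊓ g.1 c} ((f * g).1 a)) ∧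
  (∀ (b : D) (f : DBStar D B) (a : D),
      IsLUB {x : B | ∃ c : D, b * c = a ∧ x = f.1 c} ((b • f).1 a))

/-- Decreasing step functions `D → B` determined by a chain `1 = e₀ > e₁ > ⋯ > eₙ > 0`
and thresholds `a₀ < a₁ < ⋯ < aₙ`. -/
def IsFlatFn (D B : Type*) [CommRing D] [LinearOrder D] [IsStrictOrderedRing D] [BooleanAlgebra B] (f : D → B) : Prop :=
  ∃ (n : ℕ) (a : Fin (n + 1) → D) (e : Fin (n + 1) → B),
    StrictMono a ∧ StrictAnti e ∧ e 0 = ⊤ ∧ ⊥ < e (Fin.last n) ∧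
    (∀ x : D, x ≤ a 0 → f x = ⊤) ∧
    (∀ (i : Fin n) (x : D), a i.castSucc < x → x ≤ a i.succ → f x = e i.succ) ∧
    (∀ x : D, a (Fin.last n) < x → f x = ⊥)

/-- The de Vries power `D[B]♭` as a set of decreasing step functions. -/
def DBFlat (D B : Type*) [CommRing D] [LinearOrder D] [IsStrictOrderedRing D] [BooleanAlgebra B] : Type _ :=
  {f : D → B // IsFlatFn D B f}

/-- A proximity on a torsion-free f-algebra over `D` (axioms (P1)–(P10)). -/
def IsProximity (D S : Type*) [CommRing D] [LinearOrder D] [IsStrictOrderedRing D] [CommRing S] [Algebra D S]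
    [Lattice S] (r : S → S → Prop) : Prop :=
  (r 0 0 ∧ r 1 1) ∧
  (∀ s t : S, r s t → s ≤ t) ∧
  (∀ s t u v : S, s ≤ t → r t u → u ≤ v → r s v) ∧
  (∀ s t u : S, r s t → r s u → r s (t ⊓ u)) ∧
  (∀ s t : S, r s t → r (-t) (-s)) ∧
  (∀ s t u v : S, r s t → r u v → r (s + u) (t + v)) ∧
  (∀ (s t : S) (a : D), 0 < a → r s t → r (a • s) (a • t)) ∧
  (∀ s t : S, (∃ a : D, 0 < a ∧ r (a • s) (a • t)) → r s t) ∧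
  (∀ s t u v : S, 0 ≤ s → 0 ≤ t → 0 ≤ u → 0 ≤ v → r s t → r u v → r (s * u) (t * v)) ∧
  (∀ s t : S, r s t → ∃ u, r s u ∧ r u t) ∧
  (∀ s : S, 0 < s → ∃ t, 0 < t ∧ r t s)

/-- A de Vries proximity on a boolean algebra. -/
def IsDeVriesProx (B : Type*) [BooleanAlgebra B] (p : B → B → Prop) : Prop :=
  (p ⊥ ⊥ ∧ p ⊤ ⊤) ∧
  (∀ a b : B, p a b → a ≤ b) ∧
  (∀ a b c d : B, a ≤ b → p b c → c ≤ d → p a d) ∧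
  (∀ a b c : B, p a b → p a c → p a (b ⊓ c)) ∧
  (∀ a b : B, p a b → p bᶜ aᶜ) ∧
  (∀ a b : B, p a b → ∃ c, p a c ∧ p c b) ∧
  (∀ a : B, a ≠ ⊥ → ∃ b, b ≠ ⊥ ∧ p b a)

/-- A Baer ring: the annihilator of every ideal is generated by an idempotent. -/
def IsBaer (S : Type*) [CommRing S] : Prop :=
  ∀ I : Ideal S, ∃ e : S, IsIdempotentElem e ∧
    ∀ r : S, (∀ s ∈ I, r * s = 0) ↔ ∃ x : S, r = x * e

/-- Proximity morphisms between proximity (Baer-)Specker algebras (axioms (M1)–(M7)). -/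
def IsProxMorphism (D S T : Type*) [CommRing D] [LinearOrder D] [IsStrictOrderedRing D]
    [CommRing S] [Algebra D S] [CommRing T] [Algebra D T] [Lattice S] [Lattice T]
    (rS : S → S → Prop) (rT : T → T → Prop) (α : S → T) : Prop :=
  α 0 = 0 ∧
  (∀ s t : S, α (s ⊓ t) = α s ⊓ α t) ∧
  (∀ s t : S, rS s t → rT (-(α (-s))) (α t)) ∧
  (∀ t : S, IsLUB {x : T | ∃ s : S, rS s t ∧ x = α s} (α t)) ∧
  (∀ (s : S) (a : D), α (s + algebraMap D S a) = α s + algebraMap D T a) ∧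
  (∀ (s : S) (a : D), 0 ≤ a → α (a • s) = a • α s) ∧
  (∀ (s : S) (a : D), α (s ⊔ algebraMap D S a) = α s ⊔ algebraMap D T a)

/-!
Within one complete orthogonal decomposition `∑ i, c i • e i` the f-algebra order, and hence
the meet, is computed coefficientwise. For the forward direction pick `a < b` such that no
coefficient of `s` or `t` lies in `(a, b)`: then `(s - a)⁺ ⊓ (b - a)` is `(b - a) • s♭(b)`,
and proximity survives translations, positive parts, meets and division by `b - a`. For the
converse, run a monotone sequence `g` through all coefficients of `s` and `t`; the layer-cake
formula `s = g 0 + ∑ j, (g (j + 1) - g j) • s♭(g (j + 1))` exhibits `s` and `t` as sums of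
proximal pairs.
-/

theorem Finset.exists_monotone_enum {α : Type*} [LinearOrder α] [Nonempty α] (T : Finset α) :
    ∃ (K : ℕ) (g : ℕ → α), Monotone g ∧ ∀ x ∈ T, ∃ J ≤ K, g J = x := by
  classical
  induction T using Finset.induction_on_min with
  | empty => exact ⟨0, fun _ => Classical.arbitrary α, monotone_const, by simp⟩
  | insert a T haT ih =>
    obtain ⟨K, g, hg, hgT⟩ := ih
    refine ⟨K + 1, fun j => if j = 0 then a else max a (g (j - 1)), ?_, ?_⟩
    · refine monotone_nat_of_le_succ fun j => ?_
      rcases j with _ | j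
      · simp
      · simpa using max_le_max_left a (hg j.le_succ)
    · simp only [Finset.mem_insert, forall_eq_or_imp]
      refine ⟨⟨0, by simp⟩, fun x hx => ?_⟩
      obtain ⟨J, hJ, rfl⟩ := hgT x hx
      exact ⟨J + 1, by omega, by simpa using (haT _ hx).le⟩

theorem Finset.exists_lt_forall_le_of_lt {α : Type*} [LinearOrder α] [NoMinOrder α]
    (T : Finset α) (b : α) : ∃ a < b, ∀ x ∈ T, x < b → x ≤ a := by
  obtain ⟨a₀, ha₀⟩ := exists_lt b
  let U := insert a₀ (T.filter (· < b))
  have hU : ∀ x ∈ U, x < b := by simp [U, ha₀]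
  refine ⟨U.max' ⟨a₀, Finset.mem_insert_self _ _⟩, hU _ (Finset.max'_mem _ _),
    fun x hx hxb => Finset.le_max' _ _ (by simp [U, hx, hxb])⟩

/-- Telescoping along a monotone sequence; the terms beyond `J` that survive the test vanish. -/
theorem Monotone.eq_add_sum_range_ite {α : Type*} [AddCommGroup α] [PartialOrder α]
    [DecidableLE α] {g : ℕ → α} (hg : Monotone g) {J K : ℕ} (hJK : J ≤ K) :
    g J = g 0 + ∑ j ∈ Finset.range K, if g (j + 1) ≤ g J then g (j + 1) - g j else 0 := by
  have hterm : ∀ j ∈ Finset.range K, (if g (j + 1) ≤ g J then g (j + 1) - g j else 0) =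
      if j < J then g (j + 1) - g j else 0 := by
    intro j _
    by_cases hj : j < J
    · rw [if_pos (hg hj), if_pos hj]
    · rw [if_neg hj]
      split_ifs with h
      · rw [le_antisymm (h.trans (hg (not_lt.1 hj))) (hg j.le_succ), sub_self]
      · rfl
  have hrange : (Finset.range K).filter (· < J) = Finset.range J := by
    ext j; simp only [Finset.mem_filter, Finset.mem_range]; omega
  rw [Finset.sum_congr rfl hterm, ← Finset.sum_filter, hrange, Finset.sum_range_sub]
  abel

section Decomp

variable {D S : Type*} [CommRing D] [CommRing S] [Algebra D S]

theorem FullOrthDecomp.completeOrthogonalIdempotents {n : ℕ} {a : Fin n → D} {e : Fin n → S}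
    {s : S} (h : FullOrthDecomp D S a e s) : CompleteOrthogonalIdempotents e :=
  ⟨⟨h.2.1, h.2.2.2.1⟩, h.2.2.2.2.1⟩

theorem FullOrthDecomp.eq_sum_smul {n : ℕ} {a : Fin n → D} {e : Fin n → S} {s : S}
    (h : FullOrthDecomp D S a e s) : s = ∑ i, a i • e i :=
  h.2.2.2.2.2

variable {ι : Type*} [Fintype ι] {e : ι → S}

theorem CompleteOrthogonalIdempotents.mul_sum_smul (he : CompleteOrthogonalIdempotents e)
    (a : ι → D) (i : ι) : e i * ∑ j, a j • e j = a i • e i := by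
  classical
  simp [Finset.mul_sum, he.mul_eq]

theorem CompleteOrthogonalIdempotents.sum_mul_self (he : CompleteOrthogonalIdempotents e)
    (x : S) : ∑ i, e i * x = x := by
  rw [← Finset.sum_mul, he.complete, one_mul]

theorem CompleteOrthogonalIdempotents.smul_one_eq_sum (he : CompleteOrthogonalIdempotents e)
    (a : D) : a • (1 : S) = ∑ i, a • e i := by
  rw [← he.complete, Finset.smul_sum]

variable [LinearOrder D] [IsStrictOrderedRing D]

theorem OrthogonalIdempotents.orthNonnegDecomp_sum_smul (he : OrthogonalIdempotents e)
    {a : ι → D} (ha : ∀ i, 0 ≤ a i) : OrthNonnegDecomp D S (∑ i, a i • e i) := by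
  let σ := Fintype.equivFin ι
  refine ⟨_, a ∘ σ.symm, e ∘ σ.symm, fun _ => ha _, fun _ => he.idem _,
    fun i j hij => he.ortho (σ.symm.injective.ne hij), ?_⟩
  exact Fintype.sum_equiv σ _ _ fun i => by simp

/-- Refining each `v i` by `e i` glues the nonnegative decompositions into one. -/
theorem OrthogonalIdempotents.orthNonnegDecomp_sum_mul (he : OrthogonalIdempotents e)
    {v : ι → S} (hv : ∀ i, OrthNonnegDecomp D S (v i)) :
    OrthNonnegDecomp D S (∑ i, e i * v i) := by
  choose n a f ha hf hfo hvf using hv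
  have hef : OrthogonalIdempotents fun p : (Σ i, Fin (n i)) => e p.1 * f p.1 p.2 := by
    refine ⟨fun p => (he.idem p.1).mul (hf p.1 p.2), ?_⟩
    rintro ⟨i, k⟩ ⟨j, l⟩ hne
    rcases eq_or_ne i j with rfl | hij
    · have hkl : k ≠ l := fun h => hne (h ▸ rfl)
      rw [mul_mul_mul_comm, hfo i k l hkl, mul_zero]
    · rw [mul_mul_mul_comm, he.ortho hij, zero_mul]
  have hsum : ∑ i, e i * v i = ∑ p : (Σ i, Fin (n i)), a p.1 p.2 • (e p.1 * f p.1 p.2) := by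
    rw [Fintype.sum_sigma]
    refine Finset.sum_congr rfl fun i _ => ?_
    rw [hvf i, Finset.mul_sum]
    exact Finset.sum_congr rfl fun k _ => mul_smul_comm _ _ _
  rw [hsum]
  exact hef.orthNonnegDecomp_sum_smul fun p => ha p.1 p.2

end Decomp

section Order

variable {D S : Type*} [CommRing D] [LinearOrder D] [IsStrictOrderedRing D]
  [CommRing S] [Algebra D S] [Lattice S]
  (hle : ∀ s t : S, s ≤ t ↔ OrthNonnegDecomp D S (t - s))
  {ι : Type*} [Fintype ι] {e : ι → S}
include hle

theorem sum_smul_le_sum_smul (he : OrthogonalIdempotents e) {a b : ι → D}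
    (hab : ∀ i, a i ≤ b i) : ∑ i, a i • e i ≤ ∑ i, b i • e i := by
  rw [hle, ← Finset.sum_sub_distrib]
  simp_rw [← sub_smul]
  exact he.orthNonnegDecomp_sum_smul fun i => sub_nonneg.2 (hab i)

theorem sum_smul_inf_sum_smul (he : CompleteOrthogonalIdempotents e) (a b : ι → D) :
    (∑ i, a i • e i) ⊓ (∑ i, b i • e i) = ∑ i, min (a i) (b i) • e i := by
  set x := ∑ i, a i • e i
  set y := ∑ i, b i • e i
  set z := ∑ i, min (a i) (b i) • e i
  have he' := he.toOrthogonalIdempotents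
  refine le_antisymm ?_ (le_inf (sum_smul_le_sum_smul hle he' fun i => min_le_left _ _)
    (sum_smul_le_sum_smul hle he' fun i => min_le_right _ _))
  suffices ∀ u, u ≤ x → u ≤ y → u ≤ z from this _ inf_le_left inf_le_right
  intro u hux huy
  have hz : ∀ i, e i * (z - u) = e i * (if a i ≤ b i then x - u else y - u) := by
    intro i
    split_ifs with h
    · rw [mul_sub, mul_sub, he.mul_sum_smul, he.mul_sum_smul, min_eq_left h]
    · rw [mul_sub, mul_sub, he.mul_sum_smul, he.mul_sum_smul, min_eq_right (le_of_not_ge h)]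
  rw [hle, ← he.sum_mul_self (z - u), Finset.sum_congr rfl fun i _ => hz i]
  refine he'.orthNonnegDecomp_sum_mul fun i => ?_
  split_ifs
  · exact (hle _ _).1 hux
  · exact (hle _ _).1 huy

end Order

section Flat

variable {D S : Type*} [CommRing D] [LinearOrder D] [CommRing S] [Algebra D S]
  {ι : Type*} [Fintype ι]

/-- The idempotent `s♭(b)` of `s = ∑ i, c i • e i`. -/
def flat (c : ι → D) (e : ι → S) (b : D) : S :=
  ∑ i ∈ Finset.univ.filter (fun i => b ≤ c i), e i

theorem smul_flat (c : ι → D) (e : ι → S) (a b : D) :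
    a • flat c e b = ∑ i, (if b ≤ c i then a else 0) • e i := by
  rw [flat, Finset.smul_sum, Finset.sum_filter]
  exact Finset.sum_congr rfl fun i _ => by split_ifs <;> simp

/-- `-((a • 1 - s) ⊓ 0)` is the positive part of `s - a • 1`. -/
theorem neg_sub_inf_zero_inf_eq_smul_flat [IsStrictOrderedRing D] [Lattice S]
    (hle : ∀ s t : S, s ≤ t ↔ OrthNonnegDecomp D S (t - s)) {e : ι → S}
    (he : CompleteOrthogonalIdempotents e) {c : ι → D} {s : S} (hs : s = ∑ i, c i • e i)
    {a b : D} (hab : a < b) (hgap : ∀ i, c i < b → c i ≤ a) :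
    -((a • 1 - s) ⊓ 0) ⊓ (b - a) • 1 = (b - a) • flat c e b := by
  have hsub : a • 1 - s = ∑ i, (a - c i) • e i := by
    simp_rw [hs, he.smul_one_eq_sum, ← Finset.sum_sub_distrib, sub_smul]
  have hzero : (0 : S) = ∑ i, (0 : D) • e i := by simp
  rw [hsub, hzero, sum_smul_inf_sum_smul hle he, ← Finset.sum_neg_distrib]
  simp_rw [← neg_smul]
  rw [he.smul_one_eq_sum, sum_smul_inf_sum_smul hle he, smul_flat]
  refine Finset.sum_congr rfl fun i _ => congrArg (· • e i) ?_
  split_ifs with h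
  · rw [min_eq_left (by linarith : a - c i ≤ 0)]
    exact min_eq_right (by linarith)
  · rw [min_eq_right (by linarith [hgap i (lt_of_not_ge h)] : (0 : D) ≤ a - c i)]
    simp [hab.le]

theorem eq_smul_one_add_sum_smul_flat {e : ι → S} (he : CompleteOrthogonalIdempotents e)
    {c : ι → D} {s : S} (hs : s = ∑ i, c i • e i) {g : ℕ → D} (hg : Monotone g) {K : ℕ}
    (hc : ∀ i, ∃ J ≤ K, g J = c i) :
    s = g 0 • 1 + ∑ j ∈ Finset.range K, (g (j + 1) - g j) • flat c e (g (j + 1)) := by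
  have hci : ∀ i, c i = g 0 + ∑ j ∈ Finset.range K,
      if g (j + 1) ≤ c i then g (j + 1) - g j else 0 := by
    intro i
    obtain ⟨J, hJK, hJ⟩ := hc i
    rw [← hJ]
    exact hg.eq_add_sum_range_ite hJK
  simp_rw [smul_flat, he.smul_one_eq_sum, hs, Finset.sum_comm (s := Finset.range K),
    ← Finset.sum_add_distrib, ← Finset.sum_smul, ← add_smul, ← hci]

end Flat

section Proximity

variable {D S : Type*} [CommRing D] [LinearOrder D] [IsStrictOrderedRing D]
  [CommRing S] [Algebra D S] [Lattice S] {r : S → S → Prop} {s t u v : S}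

namespace IsProximity

theorem zero (hr : IsProximity D S r) : r 0 0 := hr.1.1

theorem one (hr : IsProximity D S r) : r 1 1 := hr.1.2

theorem mono (hr : IsProximity D S r) (hst : s ≤ t) (htu : r t u) (huv : u ≤ v) : r s v :=
  hr.2.2.1 s t u v hst htu huv

theorem le_inf (hr : IsProximity D S r) (hst : r s t) (hsu : r s u) : r s (t ⊓ u) :=
  hr.2.2.2.1 s t u hst hsu

theorem neg (hr : IsProximity D S r) (h : r s t) : r (-t) (-s) := hr.2.2.2.2.1 s t h

theorem add (hr : IsProximity D S r) (hst : r s t) (huv : r u v) : r (s + u) (t + v) :=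
  hr.2.2.2.2.2.1 s t u v hst huv

theorem smul (hr : IsProximity D S r) {a : D} (ha : 0 < a) (h : r s t) : r (a • s) (a • t) :=
  hr.2.2.2.2.2.2.1 s t a ha h

theorem of_smul (hr : IsProximity D S r) {a : D} (ha : 0 < a) (h : r (a • s) (a • t)) : r s t :=
  hr.2.2.2.2.2.2.2.1 s t ⟨a, ha, h⟩

theorem inf (hr : IsProximity D S r) (hst : r s t) (huv : r u v) : r (s ⊓ u) (t ⊓ v) :=
  hr.le_inf (hr.mono inf_le_left hst le_rfl) (hr.mono inf_le_right huv le_rfl)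

theorem smul_of_nonneg (hr : IsProximity D S r) {a : D} (ha : 0 ≤ a) (h : r s t) :
    r (a • s) (a • t) := by
  rcases ha.eq_or_lt with rfl | ha
  · simpa using hr.zero
  · exact hr.smul ha h

theorem smul_one (hr : IsProximity D S r) (a : D) : r (a • 1) (a • 1) := by
  rcases le_or_gt 0 a with ha | ha
  · exact hr.smul_of_nonneg ha hr.one
  · simpa using hr.smul (neg_pos.2 ha) (hr.neg hr.one)

theorem sum (hr : IsProximity D S r) {κ : Type*} (A : Finset κ) {f g : κ → S}
    (h : ∀ j ∈ A, r (f j) (g j)) : r (∑ j ∈ A, f j) (∑ j ∈ A, g j) := by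
  have := Finset.sum_induction (fun j => (f j, g j)) (fun p => r p.1 p.2)
    (fun _ _ => hr.add) hr.zero h
  simpa [Prod.fst_sum, Prod.snd_sum] using this

end IsProximity

end Proximity

section Main

variable {D S : Type*} [CommRing D] [LinearOrder D] [IsStrictOrderedRing D]
  [CommRing S] [Algebra D S] [Lattice S] {r : S → S → Prop}
  {ι κ : Type*} [Fintype ι] [Fintype κ] {cs : ι → D} {Es : ι → S}
  {ct : κ → D} {Et : κ → S}
  {s t : S}

theorem IsProximity.flat_of_rel (hr : IsProximity D S r)
    (hle : ∀ s t : S, s ≤ t ↔ OrthNonnegDecomp D S (t - s))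
    (hEs : CompleteOrthogonalIdempotents Es) (hs : s = ∑ i, cs i • Es i)
    (hEt : CompleteOrthogonalIdempotents Et) (ht : t = ∑ i, ct i • Et i)
    (hst : r s t) (b : D) : r (flat cs Es b) (flat ct Et b) := by
  classical
  obtain ⟨a, hab, hgap⟩ :=
    Finset.exists_lt_forall_le_of_lt (Finset.univ.image cs ∪ Finset.univ.image ct) b
  have hcut :
      r (-((a • 1 - s) ⊓ 0) ⊓ (b - a) • 1) (-((a • 1 - t) ⊓ 0) ⊓ (b - a) • 1) := by
    have := hr.add (hr.smul_one a) (hr.neg hst)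
    simp only [← sub_eq_add_neg] at this
    exact hr.inf (hr.neg (hr.inf this hr.zero)) (hr.smul_one _)
  rw [neg_sub_inf_zero_inf_eq_smul_flat hle hEs hs hab fun i hi => hgap _ (by simp) hi,
    neg_sub_inf_zero_inf_eq_smul_flat hle hEt ht hab fun i hi => hgap _ (by simp) hi] at hcut
  exact hr.of_smul (sub_pos.2 hab) hcut

theorem IsProximity.rel_of_forall_flat (hr : IsProximity D S r)
    (hEs : CompleteOrthogonalIdempotents Es) (hs : s = ∑ i, cs i • Es i)
    (hEt : CompleteOrthogonalIdempotents Et) (ht : t = ∑ i, ct i • Et i)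
    (h : ∀ b, r (flat cs Es b) (flat ct Et b)) : r s t := by
  classical
  obtain ⟨K, g, hg, hgT⟩ := (Finset.univ.image cs ∪ Finset.univ.image ct).exists_monotone_enum
  rw [eq_smul_one_add_sum_smul_flat hEs hs hg fun i => hgT _ (by simp),
    eq_smul_one_add_sum_smul_flat hEt ht hg fun i => hgT _ (by simp)]
  exact hr.add (hr.smul_one _)
    (hr.sum _ fun j _ => hr.smul_of_nonneg (sub_nonneg.2 (hg j.le_succ)) (h _))

end Main

theorem statement15_general (D S : Type*) [CommRing D] [LinearOrder D] [IsStrictOrderedRing D] [CommRing S] [Algebra D S]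
    [Lattice S]
    (hle : ∀ s t : S, s ≤ t ↔ OrthNonnegDecomp D S (t - s))
    (r : S → S → Prop) (hr : IsProximity D S r)
    (s t : S) {ns nt : ℕ} (cs : Fin ns → D) (Es : Fin ns → S)
    (ct : Fin nt → D) (Et : Fin nt → S)
    (hds : FullOrthDecomp D S cs Es s) (hdt : FullOrthDecomp D S ct Et t) :
    r s t ↔ ∀ b : D,
      r (∑ i ∈ Finset.univ.filter (fun i => b ≤ cs i), Es i)
        (∑ i ∈ Finset.univ.filter (fun i => b ≤ ct i), Et i) := by
  have hEs := hds.completeOrthogonalIdempotents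
  have hEt := hdt.completeOrthogonalIdempotents
  exact ⟨hr.flat_of_rel hle hEs hds.eq_sum_smul hEt hdt.eq_sum_smul,
    hr.rel_of_forall_flat hEs hds.eq_sum_smul hEt hdt.eq_sum_smul⟩

/-- `s ◁ t` iff `s♭(b) ◁ t♭(b)` for all `b ∈ D`, where
`s♭(b) = ⋁{s⊥(c) : c ≥ b}` is the sum of the idempotents of the full orthogonal
decomposition of `s` whose coefficients are `≥ b`. -/
theorem statement15 (D S : Type*) [CommRing D] [LinearOrder D] [IsStrictOrderedRing D] [CommRing S] [Algebra D S]
    (hS : IsSpecker D S) [Lattice S]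
    (hle : ∀ s t : S, s ≤ t ↔ OrthNonnegDecomp D S (t - s))
    (r : S → S → Prop) (hr : IsProximity D S r)
    (s t : S) {ns nt : ℕ} (cs : Fin ns → D) (Es : Fin ns → S)
    (ct : Fin nt → D) (Et : Fin nt → S)
    (hds : FullOrthDecomp D S cs Es s) (hdt : FullOrthDecomp D S ct Et t) :
    r s t ↔ ∀ b : D,
      r (∑ i ∈ Finset.univ.filter (fun i => b ≤ cs i), Es i)
        (∑ i ∈ Finset.univ.filter (fun i => b ≤ ct i), Et i) :=
  statement15_general D S hle r hr s t cs Es ct Et hds hdt
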